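/- arXiv:1709.04382 — 6 statements merged into one kernel-verified Lean document; each statement's English description precedes it below -/
import Mathlib

section
/- Every H-polyhedron in ℚⁿ has only finitely many extreme points; that is, if P = ⋂_{i=1}^{m} {x ∈ ℚⁿ : ⟨aᵢ, x⟩ ≤ bᵢ} for finitely many aᵢ ∈ ℚⁿ and bᵢ ∈ ℚ, then the set of extreme points of P is finite. -/
/-!
An extreme point `x` of `P = ⋂ i, {f i ≤ b i}` is determined by its set of active constraints:
if every constraint active at `x` is also active at `y`, then `y - x` is annihilated by the
active `f i`, while the inactive constraints hold with slack at `x`, so `x ± t • (y - x)` lies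
in `P` for small `t`; extremality forces `y = x`. Hence there are at most `2 ^ |ι|` extreme points.
-/

/-- An H-polyhedron in `ℚⁿ`: a finite intersection of closed half-spaces
`{x : ⟨aᵢ, x⟩ ≤ bᵢ}` (the intersection may be over an empty index set). -/
def IsHPolyhedron {n : ℕ} (P : Set (Fin n → ℚ)) : Prop :=
  ∃ (m : ℕ) (a : Fin m → Fin n → ℚ) (b : Fin m → ℚ),
    P = ⋂ i : Fin m, {x : Fin n → ℚ | ∑ j, a i j * x j ≤ b i}

open Filter Topology

section HalfSpaces

variable {𝕜 E ι : Type*} [Field 𝕜] [LinearOrder 𝕜] [IsStrictOrderedRing 𝕜]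
  [AddCommGroup E] [Module 𝕜 E]

lemma eq_zero_of_add_mem_of_sub_mem_of_mem_extremePoints {A : Set E} {x v : E}
    (hx : x ∈ A.extremePoints 𝕜) (hadd : x + v ∈ A) (hsub : x - v ∈ A) : v = 0 := by
  have : Invertible (2 : 𝕜) := invertibleOfNonzero two_ne_zero
  exact add_eq_left.mp (hx.2 hadd hsub (mem_openSegment_add_sub x v))

lemma eventually_add_smul_mem_halfSpace [TopologicalSpace 𝕜] [OrderTopology 𝕜]
    (f : E →ₗ[𝕜] 𝕜) {c : 𝕜} {x v : E} (hx : f x ≤ c) (hv : f x = c → f v = 0) :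
    ∀ᶠ t in 𝓝 (0 : 𝕜), f (x + t • v) ≤ c := by
  simp only [map_add, map_smul, smul_eq_mul]
  rcases hx.lt_or_eq with hlt | heq
  · have hcont : Tendsto (fun t : 𝕜 ↦ f x + t * f v) (𝓝 0) (𝓝 (f x)) :=
      (show Continuous fun t : 𝕜 ↦ f x + t * f v by fun_prop).tendsto' 0 _ (by simp)
    exact (hcont.eventually (gt_mem_nhds hlt)).mono fun _ ↦ le_of_lt
  · exact Eventually.of_forall fun _ ↦ by simp [hv heq, heq]

def activeSet (f : ι → E →ₗ[𝕜] 𝕜) (b : ι → 𝕜) (x : E) : Set ι :=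
  {i | f i x = b i}

variable [TopologicalSpace 𝕜] [OrderTopology 𝕜] [Finite ι] (f : ι → E →ₗ[𝕜] 𝕜) (b : ι → 𝕜)

theorem eq_of_mem_extremePoints_of_activeSet_subset {x y : E}
    (hx : x ∈ (⋂ i, {z | f i z ≤ b i}).extremePoints 𝕜)
    (hxy : activeSet f b x ⊆ activeSet f b y) : y = x := by
  set v := y - x
  have hv : ∀ i, f i x = b i → f i v = 0 := fun i hi ↦ by
    simp [v, hi, show f i y = b i from hxy hi]
  have hnear : ∀ᶠ t in 𝓝 (0 : 𝕜), x + t • v ∈ ⋂ i, {z | f i z ≤ b i} := by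
    simp only [Set.mem_iInter, Set.mem_ofPred_eq, eventually_all]
    exact fun i ↦ eventually_add_smul_mem_halfSpace (f i) (Set.mem_iInter.mp hx.1 i) (hv i)
  have hnear_neg := (continuous_neg.tendsto' (0 : 𝕜) 0 neg_zero).eventually hnear
  obtain ⟨t, ht, hadd, hsub⟩ := ((eventually_mem_nhdsWithin (s := {0}ᶜ)).and
    (nhdsWithin_le_nhds (hnear.and hnear_neg))).exists
  rw [neg_smul, ← sub_eq_add_neg] at hsub
  have htv := eq_zero_of_add_mem_of_sub_mem_of_mem_extremePoints hx hadd hsub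
  exact sub_eq_zero.mp ((smul_eq_zero.mp htv).resolve_left ht)

theorem finite_extremePoints_iInter_halfSpaces :
    ((⋂ i, {x | f i x ≤ b i}).extremePoints 𝕜).Finite :=
  Set.Finite.of_finite_image (Set.toFinite (activeSet f b '' _)) fun _ hx _ _ hxy ↦
    (eq_of_mem_extremePoints_of_activeSet_subset f b hx hxy.le).symm

end HalfSpaces

/-- An H-polyhedron has only finitely many extreme points. -/
theorem finite_extremePoints_of_isHPolyhedron {n : ℕ} (P : Set (Fin n → ℚ))
    (hP : IsHPolyhedron P) : (P.extremePoints ℚ).Finite := by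
  obtain ⟨m, a, b, rfl⟩ := hP
  exact finite_extremePoints_iInter_halfSpaces (fun i ↦ dotProductBilin ℚ ℚ (a i)) b
end

section
/- Let P ⊆ ℚ × ℚ be an H-polyhedron contained in the epigraph E = {(t, y) ∈ ℚ² : y ≥ (t² + t)/2}. Then the set {t ∈ ℚ : (t, (t² + t)/2) ∈ P} of parameters at which P meets the parabola is finite. -/
/-- The parabola function `f(t) = (t² + t)/2`. -/
def parab (t : ℚ) : ℚ := (t ^ 2 + t) / 2

/-- The epigraph `E = {(t, y) : y ≥ (t² + t)/2}`. -/
def parabEpigraph : Set (ℚ × ℚ) := {p | parab p.1 ≤ p.2}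

/-- An H-polyhedron in `ℚ × ℚ`: a finite intersection of closed half-spaces. -/
def IsHPolyhedron2 (P : Set (ℚ × ℚ)) : Prop :=
  ∃ (m : ℕ) (a : Fin m → ℚ × ℚ) (b : Fin m → ℚ),
    P = ⋂ i : Fin m, {p : ℚ × ℚ | (a i).1 * p.1 + (a i).2 * p.2 ≤ b i}

open Polynomial in
lemma quad_root_finite (α β γ : ℚ) (h : α ≠ 0 ∨ β ≠ 0) :
    {t : ℚ | α * t ^ 2 + β * t + γ = 0}.Finite := by
  have hp : (C α * X ^ 2 + C β * X + C γ : ℚ[X]) ≠ 0 := by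
    intro h0
    rcases h with h | h
    · apply h
      have := congrArg (fun p => Polynomial.coeff p 2) h0
      simpa using this
    · apply h
      have := congrArg (fun p => Polynomial.coeff p 1) h0
      simpa using this
  apply (Polynomial.finite_setOf_isRoot hp).subset
  intro t ht
  simp only [Set.mem_setOf_eq] at ht
  simp only [Set.mem_setOf_eq, IsRoot, eval_add, eval_mul, eval_C, eval_pow, eval_X]
  exact ht

/-- An H-polyhedron contained in the epigraph of the parabola meets the parabola in
finitely many points. -/
theorem finite_parabola_points_of_hPolyhedron (P : Set (ℚ × ℚ))
    (hP : IsHPolyhedron2 P) (hPE : P ⊆ parabEpigraph) :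
    {t : ℚ | (t, parab t) ∈ P}.Finite := by
  obtain ⟨m, a, b, rfl⟩ := hP
  have key : {t : ℚ | (t, parab t) ∈
        ⋂ i : Fin m, {p : ℚ × ℚ | (a i).1 * p.1 + (a i).2 * p.2 ≤ b i}} ⊆
      ⋃ i : Fin m, {t : ℚ | a i ≠ 0 ∧ (a i).1 * t + (a i).2 * parab t = b i} := by
    intro t ht
    simp only [Set.mem_setOf_eq, Set.mem_iInter] at ht
    by_contra hc
    simp only [Set.mem_iUnion, Set.mem_setOf_eq, not_exists, not_and] at hc
    have strict : ∀ i, a i ≠ 0 → (a i).1 * t + (a i).2 * parab t < b i :=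
      fun i hi => lt_of_le_of_ne (ht i) (hc i hi)
    have hzero : ∀ i, a i = 0 → (0 : ℚ) ≤ b i := by
      intro i hi
      have := ht i
      simpa [hi] using this
    by_cases hF : (Finset.univ.filter (fun i : Fin m => a i ≠ 0)).Nonempty
    · set F := Finset.univ.filter (fun i : Fin m => a i ≠ 0) with hFdef
      set ε := F.inf' hF
          (fun i => (b i - ((a i).1 * t + (a i).2 * parab t)) / (|(a i).2| + 1)) with hε
      have hεpos : 0 < ε := by
        rw [hε, Finset.lt_inf'_iff]
        intro i hiF
        have hi : a i ≠ 0 := by simpa [hFdef] using hiF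
        have h1 := strict i hi
        have h2 : (0:ℚ) < |(a i).2| + 1 := by positivity
        exact div_pos (by linarith) h2
      have hq : (t, parab t - ε) ∈
          ⋂ i : Fin m, {p : ℚ × ℚ | (a i).1 * p.1 + (a i).2 * p.2 ≤ b i} := by
        rw [Set.mem_iInter]
        intro i
        by_cases hi : a i = 0
        · simpa [hi] using hzero i hi
        · have hs := strict i hi
          have hle : ε ≤ (b i - ((a i).1 * t + (a i).2 * parab t)) / (|(a i).2| + 1) := by
            rw [hε]
            exact Finset.inf'_le _ (by simp [hFdef, hi])
          have hd : (0:ℚ) < |(a i).2| + 1 := by positivity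
          have h1 : ε * (|(a i).2| + 1) ≤ b i - ((a i).1 * t + (a i).2 * parab t) := by
            rw [← le_div_iff₀ hd]; exact hle
          have h2 : -((a i).2) ≤ |(a i).2| := neg_le_abs _
          show (a i).1 * t + (a i).2 * (parab t - ε) ≤ b i
          nlinarith [hεpos, abs_nonneg (a i).2]
      have := hPE hq
      simp only [parabEpigraph, Set.mem_setOf_eq] at this
      linarith
    · have hall : ∀ i, a i = 0 := by
        intro i
        by_contra h
        exact hF ⟨i, by simp [h]⟩
      have hq : (t, parab t - 1) ∈
          ⋂ i : Fin m, {p : ℚ × ℚ | (a i).1 * p.1 + (a i).2 * p.2 ≤ b i} := by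
        rw [Set.mem_iInter]
        intro i
        simpa [hall i] using hzero i (hall i)
      have := hPE hq
      simp only [parabEpigraph, Set.mem_setOf_eq] at this
      linarith
  apply Set.Finite.subset _ key
  apply Set.finite_iUnion
  intro i
  by_cases hi : a i = 0
  · simp [hi]
  · apply (quad_root_finite ((a i).2 / 2) ((a i).1 + (a i).2 / 2) (-(b i)) ?_).subset
    · intro t ht
      obtain ⟨-, h⟩ := ht
      simp only [Set.mem_setOf_eq]
      unfold parab at h
      linear_combination h
    · rcases Prod.mk.injEq (a i).1 (a i).2 0 0 ▸ hi with _
      by_cases h2 : (a i).2 = 0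
      · right
        have h1 : (a i).1 ≠ 0 := by
          intro h1; exact hi (Prod.ext h1 h2)
        simpa [h2] using h1
      · left
        exact div_ne_zero h2 two_ne_zero
end

section
/- Let n ≥ 2 and let P ⊆ ℚⁿ be an H-polyhedron such that every point x ∈ P satisfies x_n ≥ (x_{n-1}² + x_{n-1})/2 (where x_{n-1} and x_n denote the last two coordinates, playing the roles of the time counter t and the register y). Then the set {t ∈ ℚ : ∃ x ∈ P, x_{n-1} = t ∧ x_n = (t² + t)/2} is finite. Consequently, no such polyhedron can contain, for every natural number i, a point with x_{n-1} = i and x_n = (i² + i)/2. -/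
open Filter Topology Set Matrix

section Extrapolation

variable {ι 𝕜 : Type*} [Field 𝕜] [LinearOrder 𝕜] [IsStrictOrderedRing 𝕜]

theorem exists_pos_add_smul_sub_le [TopologicalSpace 𝕜] [OrderTopology 𝕜] [Finite ι]
    {u u' b : ι → 𝕜} (hu : u ≤ b) (htight : ∀ k, u k = b k → u' k = b k) :
    ∃ ε : 𝕜, 0 < ε ∧ u + ε • (u - u') ≤ b := by
  have hcoord : ∀ k, ∀ᶠ ε in 𝓝 (0 : 𝕜), u k + ε * (u k - u' k) ≤ b k := by
    intro k
    rcases (hu k).eq_or_lt with heq | hlt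
    · refine Eventually.of_forall fun ε => ?_
      rw [heq, htight k heq, sub_self, mul_zero, add_zero]
    · have hcont : Continuous fun ε : 𝕜 => u k + ε * (u k - u' k) := by fun_prop
      have hlim := hcont.tendsto 0
      rw [zero_mul, add_zero] at hlim
      exact (hlim.eventually (gt_mem_nhds hlt)).mono fun _ => le_of_lt
  obtain ⟨ε, hε, hpos⟩ :=
    (((eventually_all.2 hcoord).filter_mono nhdsWithin_le_nhds).and
      (self_mem_nhdsWithin (s := Ioi 0))).exists
  exact ⟨ε, hpos, fun k => by simpa using hε k⟩

theorem Matrix.exists_pos_mulVec_add_smul_sub_le [TopologicalSpace 𝕜] [OrderTopology 𝕜]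
    {σ : Type*} [Fintype ι] [Fintype σ] (A : Matrix ι σ 𝕜) {b : ι → 𝕜} {x x' : σ → 𝕜}
    (hx : A *ᵥ x ≤ b) (htight : ∀ k, (A *ᵥ x) k = b k → (A *ᵥ x') k = b k) :
    ∃ ε : 𝕜, 0 < ε ∧ A *ᵥ (x + ε • (x - x')) ≤ b := by
  simpa only [mulVec_add, mulVec_smul, mulVec_sub]
    using exists_pos_add_smul_sub_le hx htight

theorem StrictConvexOn.add_mul_sub_lt {φ : 𝕜 → 𝕜} (hφ : StrictConvexOn 𝕜 univ φ)
    {s t ε : 𝕜} (hst : s ≠ t) (hε : 0 < ε) :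
    φ s + ε * (φ s - φ t) < φ (s + ε * (s - t)) := by
  have h1ε : 0 < 1 + ε := by linarith
  have hne : s + ε * (s - t) ≠ t := by
    intro h
    have : (1 + ε) * (s - t) = 0 := by linear_combination h
    exact hst (sub_eq_zero.1 ((mul_eq_zero.1 this).resolve_left h1ε.ne'))
  -- `s` is the convex combination of `s + ε (s - t)` and `t` with weights `1/(1+ε)`, `ε/(1+ε)`
  have key := hφ.2 (mem_univ _) (mem_univ t) hne (inv_pos.2 h1ε) (div_pos hε h1ε)
    (by field_simp)
  have hcomb : (1 + ε)⁻¹ • (s + ε * (s - t)) + (ε / (1 + ε)) • t = s := by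
    simp only [smul_eq_mul]; field_simp; ring
  rw [hcomb, smul_eq_mul, smul_eq_mul] at key
  have := (mul_lt_mul_iff_of_pos_left h1ε).2 key
  field_simp at this
  linarith

end Extrapolation

theorem strictConvexOn_parab : StrictConvexOn ℚ univ parab := by
  refine ⟨convex_univ, fun x _ y _ hxy a b ha hb hab => ?_⟩
  have hgap : a * parab x + b * parab y - parab (a * x + b * y) = a * b * (x - y) ^ 2 / 2 := by
    obtain rfl : b = 1 - a := by linarith
    unfold parab; ring
  have : 0 < a * b * (x - y) ^ 2 / 2 := by
    have := sub_ne_zero.2 hxy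
    positivity
  simp only [smul_eq_mul]
  linarith

theorem Matrix.finite_setOf_mulVec_le_touching_graph {ι σ 𝕜 : Type*} [Field 𝕜] [LinearOrder 𝕜]
    [IsStrictOrderedRing 𝕜] [TopologicalSpace 𝕜] [OrderTopology 𝕜] [Fintype ι] [Fintype σ]
    (A : Matrix ι σ 𝕜) (b : ι → 𝕜) {φ : 𝕜 → 𝕜} (hφ : StrictConvexOn 𝕜 univ φ) (i j : σ)
    (habove : ∀ x, A *ᵥ x ≤ b → φ (x i) ≤ x j) :
    {t | ∃ x, A *ᵥ x ≤ b ∧ x i = t ∧ x j = φ t}.Finite := by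
  set contact := fun (T : Set ι) =>
    {t | ∃ x, A *ᵥ x ≤ b ∧ x i = t ∧ x j = φ t ∧ {k | (A *ᵥ x) k = b k} = T}
  have hsub : ∀ T, (contact T).Subsingleton := by
    rintro T s ⟨x, hx, rfl, hxφ, rfl⟩ t ⟨x', -, rfl, hx'φ, hT⟩
    by_contra hst
    obtain ⟨ε, hε, hy⟩ := A.exists_pos_mulVec_add_smul_sub_le hx
      fun k hk => (Set.ext_iff.1 hT k).2 hk
    have := habove _ hy
    simp only [Pi.add_apply, Pi.smul_apply, Pi.sub_apply, smul_eq_mul, hxφ, hx'φ] at this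
    exact (hφ.add_mul_sub_lt hst hε).not_ge this
  refine (finite_iUnion fun T => (hsub T).finite).subset ?_
  rintro t ⟨x, hx, hxt, hxφ⟩
  exact mem_iUnion.2 ⟨_, x, hx, hxt, hxφ, rfl⟩

theorem iInter_setOf_sum_mul_le_eq {ι σ R : Type*} [Fintype σ] [NonUnitalNonAssocSemiring R]
    [Preorder R] (a : ι → σ → R) (b : ι → R) :
    ⋂ i, {x : σ → R | ∑ j, a i j * x j ≤ b i} = {x | Matrix.of a *ᵥ x ≤ b} := by
  ext x
  simp [Pi.le_def, Matrix.mulVec, dotProduct]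

/-- If an H-polyhedron `P ⊆ ℚⁿ` (with `n ≥ 2`) satisfies `xₙ ≥ (x_{n-1}² + x_{n-1})/2`
for all of its points (last two coordinates playing the roles of `t` and `y`), then it
meets the parabola at finitely many parameters; consequently it cannot contain, for
every natural number `i`, a point with `x_{n-1} = i` and `xₙ = (i² + i)/2`. -/
theorem hPolyhedron_above_parabola_finite {n : ℕ} (hn : 2 ≤ n)
    (P : Set (Fin n → ℚ)) (hP : IsHPolyhedron P)
    (habove : ∀ x ∈ P, parab (x ⟨n - 2, by omega⟩) ≤ x ⟨n - 1, by omega⟩) :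
    {t : ℚ | ∃ x ∈ P, x ⟨n - 2, by omega⟩ = t ∧ x ⟨n - 1, by omega⟩ = parab t}.Finite ∧
    ¬ (∀ i : ℕ, ∃ x ∈ P, x ⟨n - 2, by omega⟩ = (i : ℚ) ∧
        x ⟨n - 1, by omega⟩ = parab (i : ℚ)) := by
  obtain ⟨m, a, b, rfl⟩ := hP
  rw [iInter_setOf_sum_mul_le_eq] at habove ⊢
  have hfin := (Matrix.of a).finite_setOf_mulVec_le_touching_graph b strictConvexOn_parab
    _ _ habove
  refine ⟨hfin, fun hall => ?_⟩
  exact (infinite_of_injective_forall_mem Nat.cast_injective hall).not_finite hfin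
end

section
/- The convex hull of a finite set of points in ℚⁿ is an H-polyhedron: for every finite F ⊆ ℚⁿ there exist finitely many aᵢ ∈ ℚⁿ and bᵢ ∈ ℚ such that the convex hull of F equals ⋂_{i=1}^{m} {x ∈ ℚⁿ : ⟨aᵢ, x⟩ ≤ bᵢ}. -/
lemma isHPolyhedron_of_fintype {n : ℕ} {ι : Type} [Fintype ι] (a : ι → Fin n → ℚ) (b : ι → ℚ) :
    IsHPolyhedron (⋂ i : ι, {x : Fin n → ℚ | ∑ j, a i j * x j ≤ b i}) := by
  classical
  refine ⟨Fintype.card ι, a ∘ (Fintype.equivFin ι).symm, b ∘ (Fintype.equivFin ι).symm, ?_⟩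
  ext x
  simp only [Set.mem_iInter, Set.mem_setOf_eq, Function.comp_apply]
  exact ⟨fun h i => h _, fun h i => by simpa using h (Fintype.equivFin ι i)⟩

/-- One step of Fourier–Motzkin elimination. -/
lemma isHPolyhedron_proj {n : ℕ} (P : Set (Fin (n + 1) → ℚ)) (hP : IsHPolyhedron P) :
    IsHPolyhedron {x : Fin n → ℚ | ∃ t, Fin.snoc x t ∈ P} := by
  classical
  obtain ⟨m, a, b, rfl⟩ := hP
  set c : Fin m → ℚ := fun i => a i (Fin.last n) with hc
  set S : Fin m → (Fin n → ℚ) → ℚ := fun i x => ∑ j, a i (Fin.castSucc j) * x j with hS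
  have hmem : ∀ (x : Fin n → ℚ) (t : ℚ),
      (∀ i, ∑ j, a i j * (Fin.snoc x t : Fin (n + 1) → ℚ) j ≤ b i) ↔
        ∀ i, S i x + c i * t ≤ b i := by
    intro x t
    refine forall_congr' fun i => ?_
    rw [Fin.sum_univ_castSucc]
    simp [hS, hc]
  let ι := {i : Fin m // c i = 0} ⊕ ({i : Fin m // 0 < c i} × {i : Fin m // c i < 0})
  let A : ι → Fin n → ℚ := fun p => match p with
    | Sum.inl i => fun l => a i.1 (Fin.castSucc l)
    | Sum.inr (i, j) => fun l => c i.1 * a j.1 (Fin.castSucc l) - c j.1 * a i.1 (Fin.castSucc l)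
  let B : ι → ℚ := fun p => match p with
    | Sum.inl i => b i.1
    | Sum.inr (i, j) => c i.1 * b j.1 - c j.1 * b i.1
  have key : {x : Fin n → ℚ | ∃ t, Fin.snoc x t ∈
        ⋂ i, {y : Fin (n + 1) → ℚ | ∑ j, a i j * y j ≤ b i}}
      = ⋂ p : ι, {x : Fin n → ℚ | ∑ j, A p j * x j ≤ B p} := by
    ext x
    simp only [Set.mem_setOf_eq, Set.mem_iInter]
    constructor
    · rintro ⟨t, ht⟩ p
      rw [hmem] at ht
      match p with
      | Sum.inl ⟨i, hi⟩ =>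
          show ∑ l, a i (Fin.castSucc l) * x l ≤ b i
          have := ht i
          rw [hi] at this
          simpa [hS] using this
      | Sum.inr (⟨i, hi⟩, ⟨j, hj⟩) =>
          show ∑ l, (c i * a j (Fin.castSucc l) - c j * a i (Fin.castSucc l)) * x l
              ≤ c i * b j - c j * b i
          have hsum : ∑ l, (c i * a j (Fin.castSucc l) - c j * a i (Fin.castSucc l)) * x l
              = c i * S j x - c j * S i x := by
            simp [hS, sub_mul, Finset.sum_sub_distrib, Finset.mul_sum, mul_assoc]
          rw [hsum]
          have h1 := ht i
          have h2 := ht j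
          linarith [mul_le_mul_of_nonneg_left h2 hi.le,
            mul_le_mul_of_nonneg_left h1 (neg_nonneg.mpr hj.le)]
    · intro h
      have hz : ∀ i, c i = 0 → S i x ≤ b i := by
        intro i hi
        have := h (Sum.inl ⟨i, hi⟩)
        simpa [hS] using this
      have hpair : ∀ i j, (hi : 0 < c i) → (hj : c j < 0) →
          c i * S j x - c j * S i x ≤ c i * b j - c j * b i := by
        intro i j hi hj
        have := h (Sum.inr (⟨i, hi⟩, ⟨j, hj⟩))
        have hsum : ∑ l, (c i * a j (Fin.castSucc l) - c j * a i (Fin.castSucc l)) * x l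
            = c i * S j x - c j * S i x := by
          simp [hS, sub_mul, Finset.sum_sub_distrib, Finset.mul_sum, mul_assoc]
        rw [show (∑ l, A (Sum.inr (⟨i, hi⟩, ⟨j, hj⟩)) l * x l)
            = ∑ l, (c i * a j (Fin.castSucc l) - c j * a i (Fin.castSucc l)) * x l from rfl,
          hsum] at this
        exact this
      -- the candidate bounds
      set u : Fin m → ℚ := fun i => (b i - S i x) / c i with hu
      have hkey : ∀ i j, 0 < c i → c j < 0 → u j ≤ u i := by
        intro i j hi hj
        have hij := hpair i j hi hj
        show (b j - S j x) / c j ≤ (b i - S i x) / c i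
        rw [div_le_iff_of_neg hj, div_mul_eq_mul_div, div_le_iff₀ hi]
        linarith
      rcases (Finset.univ.filter (fun i => 0 < c i)).eq_empty_or_nonempty with hPos | hPos
      · rcases (Finset.univ.filter (fun i => c i < 0)).eq_empty_or_nonempty with hNeg | hNeg
        · refine ⟨0, (hmem x 0).2 fun i => ?_⟩
          have hi0 : c i = 0 := by
            by_contra hne
            rcases lt_or_gt_of_ne hne with hlt | hgt
            · have hmemf : i ∈ Finset.filter (fun i => c i < 0) Finset.univ :=
                Finset.mem_filter.mpr ⟨Finset.mem_univ i, hlt⟩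
              rw [hNeg] at hmemf
              exact absurd hmemf (Finset.notMem_empty i)
            · have hmemf : i ∈ Finset.filter (fun i => 0 < c i) Finset.univ :=
                Finset.mem_filter.mpr ⟨Finset.mem_univ i, hgt⟩
              rw [hPos] at hmemf
              exact absurd hmemf (Finset.notMem_empty i)
          rw [hi0]
          simpa using hz i hi0
        · set t := (Finset.univ.filter (fun i => c i < 0)).sup' hNeg u with htdef
          refine ⟨t, (hmem x t).2 fun i => ?_⟩
          rcases lt_trichotomy (c i) 0 with hlt | heq | hgt
          · have hle : u i ≤ t :=
              Finset.le_sup' u (Finset.mem_filter.mpr ⟨Finset.mem_univ i, hlt⟩)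
            have hct : c i * t ≤ c i * u i := mul_le_mul_of_nonpos_left hle hlt.le
            have hcu : c i * u i = b i - S i x := by
              show c i * ((b i - S i x) / c i) = b i - S i x
              rw [mul_comm]
              exact div_mul_cancel₀ _ hlt.ne
            linarith
          · rw [heq]
            simpa using hz i heq
          · have hmemf : i ∈ Finset.filter (fun i => 0 < c i) Finset.univ :=
              Finset.mem_filter.mpr ⟨Finset.mem_univ i, hgt⟩
            rw [hPos] at hmemf
            exact absurd hmemf (Finset.notMem_empty i)
      · set t := (Finset.univ.filter (fun i => 0 < c i)).inf' hPos u with htdef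
        obtain ⟨i0, hi0mem, hti0⟩ := Finset.exists_mem_eq_inf' hPos u
        have hi0 : 0 < c i0 := (Finset.mem_filter.mp hi0mem).2
        refine ⟨t, (hmem x t).2 fun i => ?_⟩
        rcases lt_trichotomy (c i) 0 with hlt | heq | hgt
        · have hle : u i ≤ t := by
            rw [htdef, hti0]
            exact hkey i0 i hi0 hlt
          have hct : c i * t ≤ c i * u i := mul_le_mul_of_nonpos_left hle hlt.le
          have hcu : c i * u i = b i - S i x := by
            show c i * ((b i - S i x) / c i) = b i - S i x
            rw [mul_comm]
            exact div_mul_cancel₀ _ hlt.ne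
          linarith
        · rw [heq]
          simpa using hz i heq
        · have hle : t ≤ u i :=
            Finset.inf'_le u (Finset.mem_filter.mpr ⟨Finset.mem_univ i, hgt⟩)
          have hct : c i * t ≤ c i * u i := mul_le_mul_of_nonneg_left hle hgt.le
          have hcu : c i * u i = b i - S i x := by
            show c i * ((b i - S i x) / c i) = b i - S i x
            rw [mul_comm]
            exact div_mul_cancel₀ _ hgt.ne'
          linarith
  rw [key]
  exact isHPolyhedron_of_fintype A B

/-- Iterated Fourier–Motzkin elimination: projecting away `k` coordinates. -/
lemma isHPolyhedron_projMany {n : ℕ} (k : ℕ) (P : Set (Fin (n + k) → ℚ))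
    (hP : IsHPolyhedron P) :
    IsHPolyhedron {x : Fin n → ℚ | ∃ z : Fin k → ℚ, Fin.append x z ∈ P} := by
  induction k with
  | zero =>
      have hset : {x : Fin n → ℚ | ∃ z : Fin 0 → ℚ, Fin.append x z ∈ P} = P := by
        ext x
        simp only [Set.mem_setOf_eq]
        have happ : ∀ z : Fin 0 → ℚ, (Fin.append x z : Fin (n + 0) → ℚ) = x := by
          intro z
          funext i
          rw [show z = Fin.elim0 from funext fun i => i.elim0, Fin.append_elim0]
          rfl
        constructor
        · rintro ⟨z, hz⟩
          rwa [happ z] at hz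
        · intro hx
          exact ⟨Fin.elim0, by rwa [happ]⟩
      rwa [hset]
  | succ k ih =>
      have h1 : IsHPolyhedron {y : Fin (n + k) → ℚ | ∃ t, Fin.snoc y t ∈ P} :=
        isHPolyhedron_proj P hP
      have h2 := ih _ h1
      have hset : {x : Fin n → ℚ | ∃ z : Fin (k + 1) → ℚ, Fin.append x z ∈ P}
          = {x : Fin n → ℚ | ∃ z : Fin k → ℚ,
              Fin.append x z ∈ {y : Fin (n + k) → ℚ | ∃ t, Fin.snoc y t ∈ P}} := by
        ext x
        simp only [Set.mem_setOf_eq]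
        constructor
        · rintro ⟨z, hz⟩
          refine ⟨Fin.init z, z (Fin.last k), ?_⟩
          rwa [← Fin.append_snoc, Fin.snoc_init_self]
        · rintro ⟨z, t, h⟩
          exact ⟨Fin.snoc z t, by rwa [Fin.append_snoc]⟩
      rwa [hset]

lemma convexHull_range_eq' {n k : ℕ} (v : Fin k → (Fin n → ℚ)) :
    convexHull ℚ (Set.range v) =
      {x : Fin n → ℚ | ∃ w : Fin k → ℚ,
        (∀ i, 0 ≤ w i) ∧ ∑ i, w i = 1 ∧ x = ∑ i, w i • v i} := by
  classical
  apply Set.Subset.antisymm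
  · apply convexHull_min
    · rintro x ⟨i, rfl⟩
      refine ⟨fun j => if j = i then 1 else 0,
        fun j => by by_cases h : j = i <;> simp [h], by simp, ?_⟩
      simp [ite_smul]
    · rintro x ⟨wx, hwx0, hwx1, rfl⟩ y ⟨wy, hwy0, hwy1, rfl⟩ α β hα hβ hαβ
      refine ⟨fun i => α * wx i + β * wy i,
        fun i => by have := hwx0 i; have := hwy0 i; positivity, ?_, ?_⟩
      · rw [Finset.sum_add_distrib, ← Finset.mul_sum, ← Finset.mul_sum, hwx1, hwy1]
        simpa using hαβ
      · rw [Finset.smul_sum, Finset.smul_sum, ← Finset.sum_add_distrib]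
        exact Finset.sum_congr rfl fun i _ => by rw [add_smul, mul_smul, mul_smul]
  · rintro x ⟨w, h0, h1, rfl⟩
    exact mem_convexHull_of_exists_fintype w v h0 h1 (fun i => Set.mem_range_self i) rfl

/-- The convex hull of a finite set of points in `ℚⁿ` is an H-polyhedron. -/
theorem isHPolyhedron_convexHull_finite {n : ℕ} (F : Set (Fin n → ℚ))
    (hF : F.Finite) : IsHPolyhedron (convexHull ℚ F) := by
  classical
  obtain ⟨k, f, hf⟩ := hF.fin_embedding
  set v : Fin k → (Fin n → ℚ) := fun i => f i with hv
  have hrange : Set.range v = F := hf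
  let ι := Fin k ⊕ (Bool ⊕ (Fin n × Bool))
  let A : ι → Fin (n + k) → ℚ := fun p => match p with
    | Sum.inl i => Fin.append (0 : Fin n → ℚ) (fun i' => if i' = i then (-1 : ℚ) else 0)
    | Sum.inr (Sum.inl b) => Fin.append (0 : Fin n → ℚ) (fun _ => if b then (1 : ℚ) else -1)
    | Sum.inr (Sum.inr (j, b)) =>
        Fin.append (if b then Pi.single j (1 : ℚ) else -Pi.single j (1 : ℚ))
          (fun i => if b then -(v i j) else v i j)
  let B : ι → ℚ := fun p => match p with
    | Sum.inl _ => 0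
    | Sum.inr (Sum.inl b) => if b then 1 else -1
    | Sum.inr (Sum.inr _) => 0
  have hQ : IsHPolyhedron (⋂ p : ι, {y : Fin (n + k) → ℚ | ∑ l, A p l * y l ≤ B p}) :=
    isHPolyhedron_of_fintype A B
  have hproj := isHPolyhedron_projMany k _ hQ
  have hset : convexHull ℚ F = {x : Fin n → ℚ | ∃ z : Fin k → ℚ,
      Fin.append x z ∈ ⋂ p : ι, {y : Fin (n + k) → ℚ | ∑ l, A p l * y l ≤ B p}} := by
    rw [← hrange, convexHull_range_eq']
    ext x
    simp only [Set.mem_setOf_eq, Set.mem_iInter]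
    have hsum : ∀ (z : Fin k → ℚ) (g : Fin n → ℚ) (h : Fin k → ℚ),
        ∑ l, Fin.append g h l * Fin.append x z l
          = ∑ j, g j * x j + ∑ i, h i * z i := by
      intro z g h
      rw [Fin.sum_univ_add]
      simp [Fin.append_left, Fin.append_right]
    have hiff : ∀ z : Fin k → ℚ,
        (∀ p : ι, ∑ l, A p l * Fin.append x z l ≤ B p) ↔
          ((∀ i, 0 ≤ z i) ∧ ∑ i, z i = 1 ∧ ∀ j, x j = ∑ i, v i j * z i) := by
      intro z
      constructor
      · intro h
        refine ⟨fun i => ?_, ?_, fun j => ?_⟩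
        · have h1 : ∑ l, Fin.append (0 : Fin n → ℚ)
              (fun i' => if i' = i then (-1 : ℚ) else 0) l * Fin.append x z l ≤ 0 :=
            h (Sum.inl i)
          rw [hsum] at h1
          simp [ite_mul, Finset.sum_ite_eq'] at h1
          linarith
        · have h1 : ∑ l, Fin.append (0 : Fin n → ℚ)
              (fun _ => (1 : ℚ)) l * Fin.append x z l ≤ 1 := h (Sum.inr (Sum.inl true))
          have h2 : ∑ l, Fin.append (0 : Fin n → ℚ)
              (fun _ => (-1 : ℚ)) l * Fin.append x z l ≤ -1 := h (Sum.inr (Sum.inl false))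
          rw [hsum] at h1 h2
          simp at h1 h2
          linarith
        · have h1 : ∑ l, Fin.append (Pi.single j (1 : ℚ))
              (fun i => -(v i j)) l * Fin.append x z l ≤ 0 := h (Sum.inr (Sum.inr (j, true)))
          have h2 : ∑ l, Fin.append (-Pi.single j (1 : ℚ))
              (fun i => v i j) l * Fin.append x z l ≤ 0 := h (Sum.inr (Sum.inr (j, false)))
          rw [hsum] at h1 h2
          simp [Pi.single_apply, ite_mul, Finset.sum_ite_eq'] at h1 h2
          linarith
      · rintro ⟨h0, h1, h2⟩ p
        match p with
        | Sum.inl i =>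
            show ∑ l, Fin.append (0 : Fin n → ℚ)
              (fun i' => if i' = i then (-1 : ℚ) else 0) l * Fin.append x z l ≤ 0
            rw [hsum]
            simp [ite_mul, Finset.sum_ite_eq']
            linarith [h0 i]
        | Sum.inr (Sum.inl true) =>
            show ∑ l, Fin.append (0 : Fin n → ℚ)
              (fun _ => (1 : ℚ)) l * Fin.append x z l ≤ 1
            rw [hsum]
            simp [h1]
        | Sum.inr (Sum.inl false) =>
            show ∑ l, Fin.append (0 : Fin n → ℚ)
              (fun _ => (-1 : ℚ)) l * Fin.append x z l ≤ -1
            rw [hsum]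
            simp [h1]
        | Sum.inr (Sum.inr (j, true)) =>
            show ∑ l, Fin.append (Pi.single j (1 : ℚ))
              (fun i => -(v i j)) l * Fin.append x z l ≤ 0
            rw [hsum]
            simp [Pi.single_apply, ite_mul, Finset.sum_ite_eq']
            linarith [h2 j]
        | Sum.inr (Sum.inr (j, false)) =>
            show ∑ l, Fin.append (-Pi.single j (1 : ℚ))
              (fun i => v i j) l * Fin.append x z l ≤ 0
            rw [hsum]
            simp [Pi.single_apply, ite_mul, Finset.sum_ite_eq']
            linarith [h2 j]
    constructor
    · rintro ⟨w, hw0, hw1, hx⟩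
      refine ⟨w, ?_⟩
      refine (hiff w).2 ⟨hw0, hw1, fun j => ?_⟩
      rw [hx]
      simp [Finset.sum_apply, mul_comm]
    · rintro ⟨z, hz⟩
      obtain ⟨h0, h1, h2⟩ := (hiff z).1 hz
      refine ⟨z, h0, h1, funext fun j => ?_⟩
      rw [h2 j]
      simp [Finset.sum_apply, mul_comm]
  rw [hset]
  exact hproj
end

section
/- The image of an H-polyhedron under the projection that drops the last coordinate is again an H-polyhedron: if P ⊆ ℚⁿ⁺¹ is a finite intersection of closed half-spaces, then {x ∈ ℚⁿ : ∃ z ∈ ℚ, (x, z) ∈ P} is a finite intersection of closed half-spaces in ℚⁿ (Fourier–Motzkin elimination). -/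
lemma div_bridge {dp dq Sp Sq bp bq : ℚ} (hp : 0 < dp) (hq : dq < 0) :
    (bq - Sq) / dq ≤ (bp - Sp) / dp ↔ dp * Sq - dq * Sp ≤ dp * bq - dq * bp := by
  rw [le_div_iff₀ hp, div_mul_eq_mul_div, div_le_iff_of_neg hq]
  constructor <;> intro h <;> nlinarith [h]

/-- Fourier–Motzkin elimination: the projection of an H-polyhedron in `ℚⁿ⁺¹` obtained
by dropping the last coordinate is an H-polyhedron in `ℚⁿ`. -/
theorem isHPolyhedron_projection {n : ℕ} (P : Set (Fin (n + 1) → ℚ))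
    (hP : IsHPolyhedron P) :
    IsHPolyhedron {x : Fin n → ℚ | ∃ z : ℚ, Fin.snoc x z ∈ P} := by
  classical
  obtain ⟨m, a, b, rfl⟩ := hP
  set c : Fin m → Fin n → ℚ := fun i j => a i j.castSucc with hc
  set d : Fin m → ℚ := fun i => a i (Fin.last n) with hd
  set A : (Fin m ⊕ Fin m × Fin m) → Fin n → ℚ := Sum.elim
      (fun i => if d i = 0 then c i else 0)
      (fun pq => if 0 < d pq.1 ∧ d pq.2 < 0 then
        (fun j => d pq.1 * c pq.2 j - d pq.2 * c pq.1 j) else 0) with hA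
  set B : (Fin m ⊕ Fin m × Fin m) → ℚ := Sum.elim
      (fun i => if d i = 0 then b i else 0)
      (fun pq => if 0 < d pq.1 ∧ d pq.2 < 0 then
        d pq.1 * b pq.2 - d pq.2 * b pq.1 else 0) with hB
  have key : {x : Fin n → ℚ | ∃ z : ℚ, Fin.snoc x z ∈
        ⋂ i : Fin m, {y : Fin (n+1) → ℚ | ∑ j, a i j * y j ≤ b i}}
      = ⋂ k, {x : Fin n → ℚ | ∑ j, A k j * x j ≤ B k} := by
    ext x
    simp only [Set.mem_setOf_eq, Set.mem_iInter]
    have hsum : ∀ (z : ℚ) (i : Fin m),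
        ∑ j, a i j * (Fin.snoc x z : Fin (n+1) → ℚ) j = (∑ j, c i j * x j) + d i * z := by
      intro z i
      rw [Fin.sum_univ_castSucc]
      simp only [Fin.snoc_castSucc, Fin.snoc_last, hc, hd]
    set S : Fin m → ℚ := fun i => ∑ j, c i j * x j with hS
    constructor
    · rintro ⟨z, hz⟩ k
      have hz' : ∀ i, S i + d i * z ≤ b i := by
        intro i
        have := hz i
        rwa [hsum z i] at this
      match k with
      | Sum.inl i =>
        by_cases h0 : d i = 0
        · simp only [hA, Sum.elim_inl, if_pos h0, hB]
          have := hz' i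
          rw [h0] at this
          simpa using this.trans_eq (by ring_nf)
        · simp [hA, hB, h0]
      | Sum.inr ⟨p, q⟩ =>
        by_cases hcond : 0 < d p ∧ d q < 0
        · simp only [hA, Sum.elim_inr, if_pos hcond, hB]
          obtain ⟨hp, hq⟩ := hcond
          have h1 := hz' p
          have h2 := hz' q
          have : ∑ j, (d p * c q j - d q * c p j) * x j = d p * S q - d q * S p := by
            simp only [hS, Finset.mul_sum, ← Finset.sum_sub_distrib]
            exact Finset.sum_congr rfl fun j _ => by ring
          rw [this]
          nlinarith [mul_le_mul_of_nonneg_left h2 hp.le,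
            mul_le_mul_of_nonpos_left h1 hq.le]
        · simp [hA, hB, hcond]
    · intro h
      have hZ : ∀ i, d i = 0 → S i ≤ b i := by
        intro i h0
        have := h (Sum.inl i)
        simpa [hA, hB, h0, hS] using this
      have hPQ : ∀ p q, 0 < d p → d q < 0 →
          (b q - S q) / d q ≤ (b p - S p) / d p := by
        intro p q hp hq
        have := h (Sum.inr (p, q))
        simp only [hA, Sum.elim_inr, if_pos (And.intro hp hq), hB] at this
        have hsum2 : ∑ j, (d p * c q j - d q * c p j) * x j
            = d p * S q - d q * S p := by
          simp only [hS, Finset.mul_sum, ← Finset.sum_sub_distrib]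
          exact Finset.sum_congr rfl fun j _ => by ring
        rw [hsum2] at this
        exact (div_bridge hp hq).mpr this
      set Nset : Finset (Fin m) := Finset.univ.filter (fun i => d i < 0) with hNset
      set Pset : Finset (Fin m) := Finset.univ.filter (fun i => 0 < d i) with hPset
      set L : Fin m → ℚ := fun i => (b i - S i) / d i with hL
      set z : ℚ := if hN : Nset.Nonempty then Nset.sup' hN L
        else if hPn : Pset.Nonempty then Pset.inf' hPn L else 0 with hz
      have hub : ∀ p, 0 < d p → z ≤ L p := by
        intro p hp
        by_cases hN : Nset.Nonempty
        · rw [hz, dif_pos hN]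
          apply Finset.sup'_le
          intro q hqmem
          have hq : d q < 0 := by
            simpa [hNset] using hqmem
          exact hPQ p q hp hq
        · have hPn : Pset.Nonempty := ⟨p, by simp [hPset, hp]⟩
          rw [hz, dif_neg hN, dif_pos hPn]
          exact Finset.inf'_le _ (by simp [hPset, hp])
      have hlb : ∀ q, d q < 0 → L q ≤ z := by
        intro q hq
        have hN : Nset.Nonempty := ⟨q, by simp [hNset, hq]⟩
        rw [hz, dif_pos hN]
        exact Finset.le_sup' _ (by simp [hNset, hq])
      refine ⟨z, fun i => ?_⟩
      rw [hsum z i]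
      rcases lt_trichotomy (d i) 0 with hi | hi | hi
      · have := hlb i hi
        rw [hL, div_le_iff_of_neg hi] at this
        linarith
      · have := hZ i hi
        rw [hi]
        linarith
      · have := hub i hi
        rw [hL, le_div_iff₀ hi] at this
        linarith
  rw [key]
  exact isHPolyhedron_of_fintype A B
end

section
/- Forward invariant translation (Theorem 2, one direction): Let v : Fin N → ℚᵐ be an affinely independent family of points, let τ : Fin N → Fin N → (ℚᵈ → ℚᵈ → Prop) be a family of transition relations, and define the relation τ' on ℚᵈ × ℚᵐ by τ'((x, y), (x', y')) ↔ ∃ j k, y = v j ∧ y' = v k ∧ τ j k x x'. If I : Fin N → Set ℚᵈ is a family of convex sets that is inductive for τ (i.e., for all j, k, x, x', if x ∈ I j and τ j k x x' then x' ∈ I k), then the convex set Q = convexHull(⋃_{q} (I q × {v q})) is inductive for τ' (i.e., for all p, p', if p ∈ Q and τ'(p, p') then p' ∈ Q). -/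
/-- Forward invariant translation: if the family `I` of convex sets is inductive for the
transition relations `τ`, then the convex hull `Q` of `⋃ q, I q × {v q}` is inductive
for the product relation `τ'` (defined by `τ' (x,y) (x',y') ↔ ∃ j k, y = v j ∧
y' = v k ∧ τ j k x x'`), provided `v` is affinely independent. -/
theorem forward_invariant_translation {N m d : ℕ}
    (v : Fin N → (Fin m → ℚ)) (hv : AffineIndependent ℚ v)
    (τ : Fin N → Fin N → ((Fin d → ℚ) → (Fin d → ℚ) → Prop))
    (I : Fin N → Set (Fin d → ℚ)) (hconv : ∀ q, Convex ℚ (I q))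
    (hind : ∀ j k : Fin N, ∀ x x' : Fin d → ℚ, x ∈ I j → τ j k x x' → x' ∈ I k) :
    ∀ p p' : (Fin d → ℚ) × (Fin m → ℚ),
      p ∈ convexHull ℚ (⋃ q : Fin N, I q ×ˢ {v q}) →
      (∃ j k : Fin N, p.2 = v j ∧ p'.2 = v k ∧ τ j k p.1 p'.1) →
      p' ∈ convexHull ℚ (⋃ q : Fin N, I q ×ˢ {v q}) := by
  rintro ⟨x, y⟩ ⟨x', y'⟩ hp ⟨j, k, hy, hy', hτ⟩
  simp only at hy hy' hτ
  suffices hx : x ∈ I j by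
    apply subset_convexHull
    exact Set.mem_iUnion.2 ⟨k, ⟨hind j k x x' hx hτ, hy'⟩⟩
  haveI : Nonempty (Fin N) := ⟨j⟩
  rw [convexHull_eq] at hp
  obtain ⟨ι, t, w, z, hw0, hw1, hz, hcm⟩ := hp
  rw [Finset.centerMass_eq_of_sum_1 _ _ hw1] at hcm
  have hq : ∀ i ∈ t, ∃ q : Fin N, (z i).1 ∈ I q ∧ (z i).2 = v q := by
    intro i hi
    obtain ⟨q, hq⟩ := Set.mem_iUnion.1 (hz i hi)
    exact ⟨q, hq.1, hq.2⟩
  choose! q hq1 hq2 using hq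
  set W : Fin N → ℚ := fun n => ∑ i ∈ t.filter (fun i => q i = n), w i with hW
  have hWsum : ∑ n, W n = 1 := by
    rw [Finset.sum_fiberwise_of_maps_to (fun i _ => Finset.mem_univ (q i)) w]
    exact hw1
  have hcm1 : (∑ i ∈ t, w i • z i).1 = x := by rw [hcm]
  have hcm2 : (∑ i ∈ t, w i • z i).2 = y := by rw [hcm]
  simp only [Prod.fst_sum, Prod.snd_sum, Prod.smul_fst, Prod.smul_snd] at hcm1 hcm2
  have hWv : ∑ n, W n • v n = v j := by
    rw [hW]
    have : ∀ n : Fin N, (∑ i ∈ t.filter (fun i => q i = n), w i) • v n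
        = ∑ i ∈ t.filter (fun i => q i = n), w i • (z i).2 := by
      intro n
      rw [Finset.sum_smul]
      apply Finset.sum_congr rfl
      intro i hi
      obtain ⟨hit, hqi⟩ := Finset.mem_filter.1 hi
      rw [hq2 i hit, hqi]
    simp only [this]
    rw [Finset.sum_fiberwise_of_maps_to (fun i _ => Finset.mem_univ (q i))
      (fun i => w i • (z i).2), hcm2, hy]
  -- affine independence: W equals the indicator of j
  have hWind : W = fun n => if n = j then (1 : ℚ) else 0 := by
    have h2 : ∑ n : Fin N, (if n = j then (1 : ℚ) else 0) = 1 := by simp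
    apply (affineIndependent_iff_eq_of_fintype_affineCombination_eq ℚ v).1 hv _ _ hWsum h2
    rw [Finset.affineCombination_eq_linear_combination _ _ _ hWsum,
      Finset.affineCombination_eq_linear_combination _ _ _ h2, hWv]
    simp [ite_smul]
  have hw_zero : ∀ i ∈ t, q i ≠ j → w i = 0 := by
    intro i hi hqi
    have hWqi : W (q i) = 0 := by rw [hWind]; simp [hqi]
    have := (Finset.sum_eq_zero_iff_of_nonneg (fun i' hi' =>
      hw0 i' (Finset.mem_filter.1 hi').1)).1 hWqi
    exact this i (Finset.mem_filter.2 ⟨hi, rfl⟩)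
  -- restrict to nonzero weights
  set t' := t.filter (fun i => w i ≠ 0) with ht'
  have hsub : t' ⊆ t := Finset.filter_subset _ _
  have hsum' : ∑ i ∈ t', w i = 1 := by
    rw [ht', Finset.sum_filter_ne_zero, hw1]
  have hx' : ∑ i ∈ t', w i • (z i).1 = x := by
    rw [← hcm1]
    apply Finset.sum_subset hsub
    intro i hi hni
    have : w i = 0 := by
      by_contra h
      exact hni (Finset.mem_filter.2 ⟨hi, h⟩)
    simp [this]
  rw [← hx']
  apply (hconv j).sum_mem
  · intro i hi; exact hw0 i (hsub hi)
  · exact hsum'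
  · intro i hi
    obtain ⟨hit, hwi⟩ := Finset.mem_filter.1 hi
    have hqj : q i = j := by
      by_contra h
      exact hwi (hw_zero i hit h)
    rw [← hqj]
    exact hq1 i hit
end
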